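/- arXiv:1608.04025 — 2 statements merged into one kernel-verified Lean document; each statement's English description precedes it below -/
import Mathlib

section
/- Let Ψ = (E, Δ) be an ordered complex satisfying the quasi-circuit axiom and let v be a vertex of Ψ. Then the contraction Ψ/v (the link of v, with ground set E \ {v}) also satisfies the quasi-circuit axiom, where the circuits of Ψ/v correspond to circuits of Ψ containing v with v removed or circuits of Ψ not involving v appropriately minimal. -/
/-!
Every circuit `C` of the link of `v` is `D \ {v}` for a circuit `D` of `Δ`: take a circuit
`D ⊆ C ∪ {v}` of `Δ`; then `D \ {v} ⊆ C` is a non-face of the link, so equals `C` by minimality.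
Applying the quasi-circuit axiom of `Δ` to the lifts `D₁, D₂` gives a circuit `C₃ ⊆ (D₁ ∪ D₂) \ {c}`,
and `C₃ \ {v}` is a non-face of the link inside `(C₁ ∪ C₂) \ {c}`, hence contains one of its circuits.
-/

variable {α : Type*} [LinearOrder α] [DecidableEq α] [Fintype α]

/-- A (abstract) simplicial complex: a downward closed family of finite sets. -/
def IsComplex (Δ : Finset α → Prop) : Prop :=
  ∀ ⦃s t : Finset α⦄, Δ t → s ⊆ t → Δ s

/-- A simplicial complex with all faces contained in the ground set `E`. -/
def IsComplexOn (E : Finset α) (Δ : Finset α → Prop) : Prop :=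
  (∀ ⦃s⦄, Δ s → s ⊆ E) ∧ IsComplex Δ

/-- A facet (basis): a maximal face. -/
def IsFacet (Δ : Finset α → Prop) (B : Finset α) : Prop :=
  Δ B ∧ ∀ ⦃C⦄, Δ C → B ⊆ C → B = C

/-- A circuit with respect to the ground set `E`: a minimal non-face contained in `E`. -/
def IsCircuitOn (E : Finset α) (Δ : Finset α → Prop) (C : Finset α) : Prop :=
  C ⊆ E ∧ ¬ Δ C ∧ ∀ ⦃D⦄, D ⊂ C → Δ D

/-- A circuit: a minimal non-face. -/
def IsCircuit (Δ : Finset α → Prop) (C : Finset α) : Prop :=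
  ¬ Δ C ∧ ∀ ⦃D⦄, D ⊂ C → Δ D

/-- Purity: all facets have the same cardinality. -/
def IsPure (Δ : Finset α → Prop) : Prop :=
  ∀ ⦃B B'⦄, IsFacet Δ B → IsFacet Δ B' → B.card = B'.card

/-- Lexicographic order on finite sets, comparing sorted element lists:
`B <lex B'` iff the minimum of the symmetric difference lies in `B`. -/
def lexLt (B B' : Finset α) : Prop :=
  ∃ a ∈ B \ B', ∀ b ∈ symmDiff B B', a ≤ b

def lexLe (B B' : Finset α) : Prop := B = B' ∨ lexLt B B'

/-- `B₀` is the lexicographically smallest facet of `Δ`. -/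
def IsLexMinFacet (Δ : Finset α → Prop) (B₀ : Finset α) : Prop :=
  IsFacet Δ B₀ ∧ ∀ ⦃B⦄, IsFacet Δ B → lexLe B₀ B

/-- Gale (componentwise) order: the `i`-th smallest element of `B` is at most
the `i`-th smallest element of `B'`, for all `i` (in particular equal cardinalities). -/
def galeLe (B B' : Finset α) : Prop :=
  List.Forall₂ (· ≤ ·) (Finset.sort B (· ≤ ·)) (Finset.sort B' (· ≤ ·))

/-- Quasi-exchange axiom (without the purity requirement). -/
def QE (Δ : Finset α → Prop) : Prop :=
  ∀ ⦃B₁ B₂⦄, IsFacet Δ B₁ → IsFacet Δ B₂ →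
    ∀ b₁ ∈ B₁ \ B₂, (∀ b ∈ B₂ \ B₁, b < b₁) →
      ∃ b₂ ∈ B₂ \ B₁, IsFacet Δ (insert b₂ (B₁.erase b₁))

/-- Quasi-circuit axiom (with circuits taken relative to the ground set `E`). -/
def QCon (E : Finset α) (Δ : Finset α → Prop) : Prop :=
  ∀ ⦃C₁ C₂⦄, IsCircuitOn E Δ C₁ → IsCircuitOn E Δ C₂ → C₁ ≠ C₂ →
    ∀ c ∈ C₁ ∩ C₂, (∃ m ∈ symmDiff C₁ C₂, c < m) →
      ∃ C₃, IsCircuitOn E Δ C₃ ∧ C₃ ⊆ (C₁ ∪ C₂).erase c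

/-- Quasi-circuit axiom (circuits are arbitrary minimal non-faces). -/
def QC (Δ : Finset α → Prop) : Prop :=
  ∀ ⦃C₁ C₂⦄, IsCircuit Δ C₁ → IsCircuit Δ C₂ → C₁ ≠ C₂ →
    ∀ c ∈ C₁ ∩ C₂, (∃ m ∈ symmDiff C₁ C₂, c < m) →
      ∃ C₃, IsCircuit Δ C₃ ∧ C₃ ⊆ (C₁ ∪ C₂).erase c

/-- `b` is an internally passive element of the facet `B`. -/
def InternallyPassive (Δ : Finset α → Prop) (B : Finset α) (b : α) : Prop :=
  b ∈ B ∧ ∃ b', b' < b ∧ b' ∉ B ∧ IsFacet Δ (insert b' (B.erase b))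

/-- Contraction of a face `I`. -/
def contract (Δ : Finset α → Prop) (I : Finset α) : Finset α → Prop :=
  fun J => Disjoint J I ∧ Δ (J ∪ I)

/-- Quasi-independence axiom: `Δ` is pure and for faces `I₁, I₂` with `|I₁| > |I₂|`,
if `I₁ \ I ⊆ B_{I,0}` for some `I ⊆ I₁ ∩ I₂`, then some `e ∈ I₁ \ I₂` extends `I₂`. -/
def QI (Δ : Finset α → Prop) : Prop :=
  IsPure Δ ∧ ∀ ⦃I₁ I₂ : Finset α⦄, Δ I₁ → Δ I₂ → I₂.card < I₁.card →
    (∃ I, I ⊆ I₁ ∩ I₂ ∧ ∃ B, IsLexMinFacet (contract Δ I) B ∧ I₁ \ I ⊆ B) →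
    ∃ e ∈ I₁ \ I₂, Δ (insert e I₂)

/-- The First Basis Property. -/
inductive FBP : (Finset α → Prop) → Prop
  | rank1 (Δ : Finset α → Prop) (h : ∀ s, Δ s → s.card ≤ 1) : FBP Δ
  | unique (Δ : Finset α → Prop) (B : Finset α) (hB : IsFacet Δ B)
      (hu : ∀ B', IsFacet Δ B' → B' = B) : FBP Δ
  | step (Δ : Finset α → Prop) (B₀ : Finset α) (h₀ : IsLexMinFacet Δ B₀)
      (h1 : ∀ v, Δ {v} → v ∉ B₀ → FBP (contract Δ {v}))
      (h2 : ∀ v, Δ {v} → v ∉ B₀ →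
        ∃ Bv, IsLexMinFacet (contract Δ {v}) Bv ∧ Bv ⊆ B₀) :
      FBP Δ

section Link

variable {β : Type*} {E : Finset β} {Δ : Finset β → Prop}

lemma exists_circuitOn_subset {S : Finset β} (hSE : S ⊆ E) (hS : ¬ Δ S) :
    ∃ C, IsCircuitOn E Δ C ∧ C ⊆ S := by
  induction S using Finset.strongInduction with
  | _ S ih =>
    by_cases hsub : ∃ D ⊂ S, ¬ Δ D
    · obtain ⟨D, hDS, hD⟩ := hsub
      obtain ⟨C, hC, hCD⟩ := ih D hDS (hDS.subset.trans hSE) hD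
      exact ⟨C, hC, hCD.trans hDS.subset⟩
    · exact ⟨S, ⟨hSE, hS, fun D hDS => by_contra fun hD => hsub ⟨D, hDS, hD⟩⟩, subset_rfl⟩

lemma IsCircuitOn.eq_of_subset {C D : Finset β} (hC : IsCircuitOn E Δ C) (hDC : D ⊆ C)
    (hD : ¬ Δ D) : D = C := by
  by_contra hne
  exact hD (hC.2.2 (Finset.ssubset_iff_subset_ne.mpr ⟨hDC, hne⟩))

variable [DecidableEq β]

def link (Δ : Finset β → Prop) (v : β) : Finset β → Prop :=
  fun J => v ∉ J ∧ Δ (insert v J)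

variable {v : β}

lemma not_link_erase (hΔ : IsComplex Δ) {D : Finset β} (hD : ¬ Δ D) :
    ¬ link Δ v (D.erase v) :=
  fun h => hD (hΔ h.2 (Finset.insert_erase_subset v D))

lemma IsCircuitOn.exists_erase_eq_of_link (hΔ : IsComplexOn E Δ) (hvE : v ∈ E)
    {C : Finset β} (hC : IsCircuitOn (E.erase v) (link Δ v) C) :
    ∃ D, IsCircuitOn E Δ D ∧ D.erase v = C := by
  have hvC : v ∉ C := fun h => (Finset.mem_erase.mp (hC.1 h)).1 rfl
  have hCE : insert v C ⊆ E := Finset.insert_subset hvE (hC.1.trans (Finset.erase_subset v E))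
  obtain ⟨D, hD, hDC⟩ := exists_circuitOn_subset hCE (fun h => hC.2.1 ⟨hvC, h⟩)
  refine ⟨D, hD, hC.eq_of_subset ?_ (not_link_erase hΔ.2 hD.2.1)⟩
  calc D.erase v ⊆ (insert v C).erase v := Finset.erase_subset_erase v hDC
    _ = C := Finset.erase_insert hvC

end Link

theorem stmt15_general (E : Finset α) (Δ : Finset α → Prop) (hΔ : IsComplexOn E Δ)
    (hQC : QCon E Δ) (v : α) (hvE : v ∈ E) :
    QCon (E.erase v) (fun J => v ∉ J ∧ Δ (insert v J)) := by
  show QCon (E.erase v) (link Δ v)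
  intro C₁ C₂ hC₁ hC₂ hne c hc ⟨m, hm, hcm⟩
  obtain ⟨D₁, hD₁, rfl⟩ := hC₁.exists_erase_eq_of_link hΔ hvE
  obtain ⟨D₂, hD₂, rfl⟩ := hC₂.exists_erase_eq_of_link hΔ hvE
  have hcD : c ∈ D₁ ∩ D₂ := by
    simp only [Finset.mem_inter, Finset.mem_erase] at hc ⊢; tauto
  have hmD : m ∈ symmDiff D₁ D₂ := by
    simp only [Finset.mem_symmDiff, Finset.mem_erase] at hm ⊢; tauto
  obtain ⟨C₃, hC₃, hC₃D⟩ := hQC hD₁ hD₂ (fun h => hne (h ▸ rfl)) c hcD ⟨m, hmD, hcm⟩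
  obtain ⟨C₄, hC₄, hC₄C₃⟩ := exists_circuitOn_subset (Finset.erase_subset_erase v hC₃.1)
    (not_link_erase hΔ.2 hC₃.2.1)
  refine ⟨C₄, hC₄, hC₄C₃.trans ?_⟩
  calc C₃.erase v ⊆ ((D₁ ∪ D₂).erase c).erase v := Finset.erase_subset_erase v hC₃D
    _ = (D₁.erase v ∪ D₂.erase v).erase c := by
      rw [Finset.erase_right_comm, Finset.erase_union_distrib]

/-- the contraction of a vertex of a complex satisfying the
quasi-circuit axiom satisfies the quasi-circuit axiom. -/
theorem stmt15 (E : Finset α) (Δ : Finset α → Prop) (hΔ : IsComplexOn E Δ)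
    (hQC : QCon E Δ) (v : α) (hvE : v ∈ E) (hv : Δ {v}) :
    QCon (E.erase v) (fun J => v ∉ J ∧ Δ (insert v J)) :=
  stmt15_general E Δ hΔ hQC v hvE
end

section
/- Let Ψ = (E, Δ) be an ordered complex satisfying the First Basis Property and let I be a face of Δ disjoint from the lexicographically smallest facet B₀. Then the lexicographically smallest facet of the contraction Ψ/I is contained in B₀. -/
/-!
Induct on the face `I`, generalizing over the complex. Writing `I = insert v J`, the contraction
`Ψ/I` is `(Ψ/v)/J`. In the recursive case of the First Basis Property, `Ψ/v` again has the
property and its smallest facet `B_v` lies in `B₀`, so `J` is disjoint from `B_v` and the induction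
hypothesis puts the smallest facet of `(Ψ/v)/J` inside `B_v ⊆ B₀`. In the two base cases of the
property a nonempty face disjoint from `B₀` is a facet (rank one) or cannot exist (unique facet).
-/

variable {α : Type*} [LinearOrder α] [DecidableEq α] [Fintype α]

omit [Fintype α] in
lemma IsLexMinFacet.eq {Δ : Finset α → Prop} {B B' : Finset α}
    (h : IsLexMinFacet Δ B) (h' : IsLexMinFacet Δ B') : B = B' := by
  rcases h.2 h'.1 with rfl | ⟨a, ha, hmin⟩
  · rfl
  rcases h'.2 h.1 with heq | ⟨a', ha', hmin'⟩
  · exact heq.symm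
  rw [Finset.mem_sdiff] at ha ha'
  have : a = a' := le_antisymm (hmin a' (by simp [symmDiff, ha'.1, ha'.2]))
    (hmin' a (by simp [symmDiff, ha.1, ha.2]))
  exact absurd (this ▸ ha.1) ha'.2

omit [LinearOrder α] [DecidableEq α] in
lemma exists_isFacet_superset {Δ : Finset α → Prop} {I : Finset α} (hI : Δ I) :
    ∃ B, IsFacet Δ B ∧ I ⊆ B := by
  obtain ⟨B, hB, hmax⟩ := (Set.toFinite {B : Finset α | Δ B ∧ I ⊆ B}).exists_maximalFor
    Finset.card _ ⟨I, hI, subset_rfl⟩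
  exact ⟨B, ⟨hB.1, fun C hC hBC => Finset.eq_of_subset_of_card_le hBC
    (hmax ⟨hC, hB.2.trans hBC⟩ (Finset.card_le_card hBC))⟩, hB.2⟩

omit [LinearOrder α] [Fintype α] in
lemma IsComplex.contract {Δ : Finset α → Prop} (hc : IsComplex Δ) (I : Finset α) :
    IsComplex (contract Δ I) :=
  fun _ _ ⟨hd, hΔ⟩ hst => ⟨hd.mono_left hst, hc hΔ (Finset.union_subset_union_left hst)⟩

omit [LinearOrder α] [Fintype α] in
lemma contract_contract {Δ : Finset α → Prop} {I J : Finset α} (h : Disjoint I J) :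
    contract (contract Δ I) J = contract Δ (I ∪ J) := by
  funext K
  simp only [contract, Finset.disjoint_union_left, Finset.disjoint_union_right,
    Finset.union_right_comm K J I, Finset.union_assoc K I J, Finset.union_comm I J,
    h.symm, and_true, eq_iff_iff]
  tauto

omit [LinearOrder α] [Fintype α] in
lemma contract_empty (Δ : Finset α → Prop) : contract Δ ∅ = Δ := by
  funext J
  simp [contract]

omit [LinearOrder α] [Fintype α] in
lemma contract_of_union {Δ : Finset α → Prop} {I J : Finset α} (h : Disjoint I J)
    (hIJ : Δ (I ∪ J)) : contract Δ I J :=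
  ⟨h.symm, Finset.union_comm I J ▸ hIJ⟩

omit [Fintype α] in
lemma IsFacet.isLexMinFacet_contract_empty {Δ : Finset α → Prop} {I : Finset α}
    (hI : IsFacet Δ I) : IsLexMinFacet (contract Δ I) ∅ := by
  have hface : ∀ J, contract Δ I J → J = ∅ := fun J ⟨hd, hJ⟩ =>
    Finset.disjoint_self_iff_empty J |>.mp <| hd.mono_right <|
      (hI.2 hJ Finset.subset_union_right).symm ▸ Finset.subset_union_left
  have hempty : contract Δ I ∅ := ⟨Finset.disjoint_empty_left I, by simpa using hI.1⟩
  exact ⟨⟨hempty, fun C hC _ => (hface C hC).symm⟩, fun B hB => Or.inl (hface B hB.1).symm⟩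

omit [LinearOrder α] [DecidableEq α] [Fintype α] in
lemma isFacet_of_rank_le_one {Δ : Finset α → Prop} (hrk : ∀ s, Δ s → s.card ≤ 1)
    {I : Finset α} (hI : Δ I) (hne : I.Nonempty) : IsFacet Δ I :=
  ⟨hI, fun C hC hIC => Finset.eq_of_subset_of_card_le hIC
    ((hrk C hC).trans (Finset.card_pos.mpr hne))⟩

theorem FBP.exists_isLexMinFacet_contract_subset {Δ : Finset α → Prop} (hc : IsComplex Δ)
    (hFBP : FBP Δ) {B₀ : Finset α} (hB₀ : IsLexMinFacet Δ B₀) {I : Finset α} (hI : Δ I)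
    (hdisj : Disjoint I B₀) : ∃ Bc, IsLexMinFacet (contract Δ I) Bc ∧ Bc ⊆ B₀ := by
  induction I using Finset.induction_on generalizing Δ B₀ with
  | empty => exact ⟨B₀, (contract_empty Δ).symm ▸ hB₀, subset_rfl⟩
  | insert v I hvI ih =>
    have hvB₀ : v ∉ B₀ := Finset.disjoint_insert_left.mp hdisj |>.1
    cases hFBP with
    | rank1 _ hrk =>
      exact ⟨∅, (isFacet_of_rank_le_one hrk hI (Finset.insert_nonempty v I))
        |>.isLexMinFacet_contract_empty, Finset.empty_subset _⟩
    | unique _ B hB hu =>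
      obtain ⟨B', hB', hIB'⟩ := exists_isFacet_superset hI
      rw [hu B' hB', ← hu B₀ hB₀.1] at hIB'
      exact absurd (hIB' (Finset.mem_insert_self v I)) hvB₀
    | step _ B₀' h₀ hFBPv hBv =>
      rw [h₀.eq hB₀] at hFBPv hBv
      have hv : Δ {v} := hc hI (Finset.singleton_subset_iff.mpr (Finset.mem_insert_self v I))
      obtain ⟨Bv, hBvmin, hBvB₀⟩ := hBv v hv hvB₀
      have hvI' : Disjoint {v} I := Finset.disjoint_singleton_left.mpr hvI
      obtain ⟨Bc, hBc, hBcBv⟩ := ih (hc.contract {v}) (hFBPv v hv hvB₀) hBvmin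
        (contract_of_union hvI' (Finset.insert_eq v I ▸ hI))
        ((Finset.disjoint_insert_left.mp hdisj).2.mono_right hBvB₀)
      rw [contract_contract hvI', ← Finset.insert_eq] at hBc
      exact ⟨Bc, hBc, hBcBv.trans hBvB₀⟩

/-- in a complex satisfying the First Basis Property, for a face `I`
disjoint from `B₀`, the lexicographically smallest facet of the contraction `Ψ/I`
is contained in `B₀`. -/
theorem stmt18 (E : Finset α) (Δ : Finset α → Prop) (hΔ : IsComplexOn E Δ)
    (hFBP : FBP Δ) (B₀ : Finset α) (hB₀ : IsLexMinFacet Δ B₀)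
    (I : Finset α) (hI : Δ I) (hdisj : Disjoint I B₀) :
    ∃ Bc, IsLexMinFacet (contract Δ I) Bc ∧ Bc ⊆ B₀ :=
  hFBP.exists_isLexMinFacet_contract_subset hΔ.2 hB₀ hI hdisj
end
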